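/- Let n ≥ 2 and define K₃(t,x,y) = (2/π^{n/2}) t e^{−(n+2)t} (1 − e^{−2t})^{−(n+4)/2} |y − e^{−t}x|² exp(−|y − e^{−t}x|²/(1 − e^{−2t})) e^{|y|² − |x|²}. There exists C > 0 such that for all (x,y) ∈ N^c with x ≠ 0 and y ≠ 0, sup_{t>0} K₃(t,x,y) ≤ C min((1 + |x|)^n, (|x| sin θ(x,y))^{−n}) e^{|y|² − |x|²}, where θ(x,y) is the angle between x and y, so sin θ(x,y) = |y − (⟨x,y⟩/|x|²)x| / |y|. -/

import Mathlib

open MeasureTheory Real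
open scoped ENNReal RealInnerProductSpace

/-- The local region `N = {(x,y) : |x-y| ≤ min(1, 1/|x|)}`. -/
def localN (n : ℕ) : Set (EuclideanSpace ℝ (Fin n) × EuclideanSpace ℝ (Fin n)) :=
  {p | ‖p.1 - p.2‖ ≤ 1 ∧ ‖p.1 - p.2‖ * ‖p.1‖ ≤ 1}

/-- The kernel `K₃(t,x,y)`, the third term of `t ∂_t T_t^𝒜(x,y)`. -/
noncomputable def K3 (n : ℕ) (t : ℝ) (x y : EuclideanSpace ℝ (Fin n)) : ℝ :=
  (2 / Real.pi ^ ((n : ℝ) / 2)) * t * Real.exp (-((n : ℝ) + 2) * t) *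
    (1 - Real.exp (-2 * t)) ^ (-((n : ℝ) + 4) / 2) * ‖y - Real.exp (-t) • x‖ ^ 2 *
    Real.exp (-‖y - Real.exp (-t) • x‖ ^ 2 / (1 - Real.exp (-2 * t))) *
    Real.exp (‖y‖ ^ 2 - ‖x‖ ^ 2)

/-- The component of `y` orthogonal to `x`: `y_⊥ = y - (⟨x,y⟩/|x|²) x`. -/
noncomputable def yPerp (n : ℕ) (x y : EuclideanSpace ℝ (Fin n)) : EuclideanSpace ℝ (Fin n) :=
  y - ((⟪x, y⟫ : ℝ) / ‖x‖ ^ 2) • x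

/-- `min((1+|x|)ⁿ, (|x| sin θ(x,y))⁻ⁿ)`, interpreted as `(1+|x|)ⁿ` when `sin θ(x,y) = 0`
(since then `(|x| sin θ)⁻ⁿ = +∞`); here `sin θ(x,y) = |y_⊥|/|y|`. -/
noncomputable def minTerm (n : ℕ) (x y : EuclideanSpace ℝ (Fin n)) : ℝ :=
  if ‖yPerp n x y‖ = 0 then (1 + ‖x‖) ^ n
  else min ((1 + ‖x‖) ^ n) ((‖x‖ * (‖yPerp n x y‖ / ‖y‖)) ^ (-(n : ℝ)))

namespace Stmt14Aux

/-- `u e^{-u} ≤ (2/e) e^{-u/2}` for all real `u`. -/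
lemma ue (u : ℝ) : u * Real.exp (-u) ≤ (2 / Real.exp 1) * Real.exp (-(u/2)) := by
  have h1 := Real.add_one_le_exp (u/2 - 1)
  rw [Real.exp_sub] at h1
  have he : (0:ℝ) < Real.exp 1 := Real.exp_pos 1
  have h1' : u/2 ≤ Real.exp (u/2) / Real.exp 1 := by linarith
  have h3 : u ≤ 2 / Real.exp 1 * Real.exp (u/2) := by
    calc u = 2 * (u/2) := by ring
      _ ≤ 2 * (Real.exp (u/2) / Real.exp 1) := by linarith
      _ = 2 / Real.exp 1 * Real.exp (u/2) := by ring
  calc u * Real.exp (-u) ≤ (2 / Real.exp 1 * Real.exp (u/2)) * Real.exp (-u) :=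
        mul_le_mul_of_nonneg_right h3 (Real.exp_pos _).le
    _ = (2 / Real.exp 1) * Real.exp (-(u/2)) := by
        rw [mul_assoc, ← Real.exp_add]
        congr 2
        ring

lemma pow_exp (n : ℕ) (hn : 1 ≤ n) (w : ℝ) (hw : 0 ≤ w) :
    w ^ n * Real.exp (-w) ≤ ((n : ℝ) / Real.exp 1) ^ n := by
  have hn0 : (0:ℝ) < (n:ℝ) := by exact_mod_cast hn
  have he : (0:ℝ) < Real.exp 1 := Real.exp_pos 1
  have h1 := Real.add_one_le_exp (w / n - 1)
  rw [Real.exp_sub] at h1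
  have h1' : w/(n:ℝ) ≤ Real.exp (w/n) / Real.exp 1 := by linarith
  have h2 : w ≤ (n : ℝ) / Real.exp 1 * Real.exp (w / n) := by
    calc w = (n:ℝ) * (w/(n:ℝ)) := by field_simp
      _ ≤ (n:ℝ) * (Real.exp (w/n) / Real.exp 1) := by
          exact mul_le_mul_of_nonneg_left h1' hn0.le
      _ = (n : ℝ) / Real.exp 1 * Real.exp (w / n) := by ring
  calc w ^ n * Real.exp (-w)
      ≤ ((n : ℝ) / Real.exp 1 * Real.exp (w / n)) ^ n * Real.exp (-w) := by
        gcongr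
    _ = ((n:ℝ)/Real.exp 1) ^ n * (Real.exp ((n:ℕ) * (w / n)) * Real.exp (-w)) := by
        rw [mul_pow, Real.exp_nat_mul]; ring
    _ = ((n:ℝ)/Real.exp 1) ^ n := by
        rw [← Real.exp_add, show ((n:ℕ):ℝ) * (w / n) + -w = 0 by field_simp; ring, Real.exp_zero,
          mul_one]

lemma rpow_half_exp (n : ℕ) (hn : 1 ≤ n) (w : ℝ) (hw : 0 < w) :
    w ^ ((n:ℝ)/2) * Real.exp (-w) ≤ 1 + ((n:ℝ)/Real.exp 1) ^ n := by
  have hCn : (0:ℝ) ≤ ((n:ℝ)/Real.exp 1) ^ n := by positivity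
  rcases le_total w 1 with h | h
  · have h1 : w ^ ((n:ℝ)/2) ≤ 1 := Real.rpow_le_one hw.le h (by positivity)
    have h2 : Real.exp (-w) ≤ 1 := Real.exp_le_one_iff.mpr (by linarith)
    nlinarith [Real.exp_pos (-w), Real.rpow_nonneg hw.le ((n:ℝ)/2)]
  · have h1 : w ^ ((n:ℝ)/2) ≤ w ^ ((n:ℝ)) := by
      apply Real.rpow_le_rpow_of_exponent_le h
      have : (0:ℝ) ≤ (n:ℝ) := Nat.cast_nonneg n
      linarith
    rw [Real.rpow_natCast] at h1
    have h2 := pow_exp n hn w (by linarith)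
    have h3 := Real.exp_pos (-w)
    nlinarith

/-- Gaussian sup: `s^{-n/2} e^{-q/s} ≤ C_n q^{-n/2}`. -/
lemma gausup (n : ℕ) (hn : 1 ≤ n) (s q : ℝ) (hs : 0 < s) (hq : 0 < q) :
    s ^ (-((n:ℝ)/2)) * Real.exp (-(q/s)) ≤ (1 + ((n:ℝ)/Real.exp 1) ^ n) * q ^ (-((n:ℝ)/2)) := by
  have hw : 0 < q / s := div_pos hq hs
  have key := rpow_half_exp n hn (q/s) hw
  have e1 : (q/s) ^ ((n:ℝ)/2) = q ^ ((n:ℝ)/2) / s ^ ((n:ℝ)/2) := Real.div_rpow hq.le hs.le _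
  have hqp : (0:ℝ) < q ^ ((n:ℝ)/2) := Real.rpow_pos_of_pos hq _
  have hsp : (0:ℝ) < s ^ ((n:ℝ)/2) := Real.rpow_pos_of_pos hs _
  have e2 : s ^ (-((n:ℝ)/2)) = q ^ (-((n:ℝ)/2)) * (q/s) ^ ((n:ℝ)/2) := by
    rw [e1, Real.rpow_neg hq.le, Real.rpow_neg hs.le]
    field_simp
  calc s ^ (-((n:ℝ)/2)) * Real.exp (-(q/s))
      = q ^ (-((n:ℝ)/2)) * ((q/s) ^ ((n:ℝ)/2) * Real.exp (-(q/s))) := by rw [e2]; ring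
    _ ≤ q ^ (-((n:ℝ)/2)) * (1 + ((n:ℝ)/Real.exp 1) ^ n) := by
        exact mul_le_mul_of_nonneg_left key (Real.rpow_nonneg hq.le _)
    _ = (1 + ((n:ℝ)/Real.exp 1) ^ n) * q ^ (-((n:ℝ)/2)) := by ring

lemma tle (t : ℝ) : t * Real.exp (-(2*t)) ≤ (1 - Real.exp (-(2*t)))/2 := by
  have h := Real.add_one_le_exp (2*t)
  have hE := Real.exp_pos (2*t)
  rw [Real.exp_neg]
  have hi := mul_inv_cancel₀ hE.ne'
  nlinarith [mul_nonneg (sub_nonneg.mpr h) (inv_nonneg.mpr hE.le)]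

/-- antitone in base for negative exponents -/
lemma rpow_neg_anti (a b m : ℝ) (ha : 0 < a) (hab : a ≤ b) (hm : 0 ≤ m) :
    b ^ (-m) ≤ a ^ (-m) := by
  have hb : 0 < b := lt_of_lt_of_le ha hab
  rw [Real.rpow_neg ha.le, Real.rpow_neg hb.le]
  have h1 : a ^ m ≤ b ^ m := Real.rpow_le_rpow ha.le hab hm
  have h2 : (0:ℝ) < a ^ m := Real.rpow_pos_of_pos ha m
  exact inv_anti₀ h2 h1

lemma inv_bound (m : ℝ) (hm : 0 ≤ m) (s B : ℝ) (hB : 0 < B) (hs : B⁻¹ ≤ s) :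
    s ^ (-m) ≤ B ^ m := by
  have h := rpow_neg_anti _ _ m (by positivity) hs hm
  calc s ^ (-m) ≤ (B⁻¹) ^ (-m) := h
    _ = B ^ m := by
        rw [Real.inv_rpow hB.le, Real.rpow_neg hB.le, inv_inv]

lemma Bsplit (a c : ℝ) (ha : 0 ≤ a) (hc : 0 ≤ c) (n : ℕ) :
    (c * a^2) ^ ((n:ℝ)/2) = c ^ ((n:ℝ)/2) * a ^ n := by
  rw [Real.mul_rpow hc (by positivity)]
  congr 1
  rw [← Real.rpow_natCast a 2, ← Real.rpow_mul ha,
    show ((2:ℕ):ℝ) * ((n:ℝ)/2) = (n:ℝ) by push_cast; ring, Real.rpow_natCast]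

/-- orthogonal projection onto span y minimizes distance -/
lemma proj_min {m : ℕ} (y z : EuclideanSpace ℝ (Fin m)) (hy : y ≠ 0) (c : ℝ) :
    ‖z - ((⟪y, z⟫ : ℝ) / ‖y‖ ^ 2) • y‖ ≤ ‖z - c • y‖ := by
  have hy2 : (‖y‖:ℝ) ^ 2 ≠ 0 := pow_ne_zero 2 (norm_ne_zero_iff.mpr hy)
  set p : ℝ := (⟪y, z⟫ : ℝ) / ‖y‖ ^ 2 with hp
  have hwy : (⟪z - p • y, y⟫ : ℝ) = 0 := by
    rw [inner_sub_left, real_inner_smul_left, hp, real_inner_comm z y,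
      real_inner_self_eq_norm_sq]
    field_simp; ring
  have hdecomp : z - c • y = (z - p • y) + (p - c) • y := by
    rw [sub_smul]; abel
  have hnorm : ‖z - c • y‖ ^ 2 = ‖z - p • y‖ ^ 2 + ‖(p - c) • y‖ ^ 2 := by
    rw [hdecomp, norm_add_sq_real, real_inner_smul_right, hwy]
    ring
  nlinarith [norm_nonneg (z - p • y), norm_nonneg (z - c • y), sq_nonneg ‖(p - c) • y‖]

lemma perp_symm {m : ℕ} (x y : EuclideanSpace ℝ (Fin m)) (hx : x ≠ 0) (hy : y ≠ 0) :
    ‖x - ((⟪y, x⟫ : ℝ) / ‖y‖ ^ 2) • y‖ * ‖y‖ = ‖y - ((⟪x, y⟫ : ℝ) / ‖x‖ ^ 2) • x‖ * ‖x‖ := by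
  have hx2 : (‖x‖:ℝ) ^ 2 ≠ 0 := pow_ne_zero 2 (norm_ne_zero_iff.mpr hx)
  have hy2 : (‖y‖:ℝ) ^ 2 ≠ 0 := pow_ne_zero 2 (norm_ne_zero_iff.mpr hy)
  have e1 : ‖x - ((⟪y, x⟫ : ℝ) / ‖y‖ ^ 2) • y‖ ^ 2 * ‖y‖ ^ 2
      = ‖x‖^2 * ‖y‖^2 - (⟪x, y⟫ : ℝ)^2 := by
    rw [norm_sub_sq_real, real_inner_smul_right, norm_smul, real_inner_comm y x]
    rw [mul_pow, Real.norm_eq_abs, sq_abs]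
    field_simp
    ring
  have e2 : ‖y - ((⟪x, y⟫ : ℝ) / ‖x‖ ^ 2) • x‖ ^ 2 * ‖x‖ ^ 2
      = ‖x‖^2 * ‖y‖^2 - (⟪x, y⟫ : ℝ)^2 := by
    rw [norm_sub_sq_real, real_inner_smul_right, norm_smul, real_inner_comm x y]
    rw [mul_pow, Real.norm_eq_abs, sq_abs]
    field_simp
    ring
  have h : (‖x - ((⟪y, x⟫ : ℝ) / ‖y‖ ^ 2) • y‖ * ‖y‖) ^ 2
      = (‖y - ((⟪x, y⟫ : ℝ) / ‖x‖ ^ 2) • x‖ * ‖x‖) ^ 2 := by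
    rw [mul_pow, mul_pow, e1, e2]
  have h1 : (0:ℝ) ≤ ‖x - ((⟪y, x⟫ : ℝ) / ‖y‖ ^ 2) • y‖ * ‖y‖ := by positivity
  have h2 : (0:ℝ) ≤ ‖y - ((⟪x, y⟫ : ℝ) / ‖x‖ ^ 2) • x‖ * ‖x‖ := by positivity
  calc ‖x - ((⟪y, x⟫ : ℝ) / ‖y‖ ^ 2) • y‖ * ‖y‖
      = Real.sqrt ((‖x - ((⟪y, x⟫ : ℝ) / ‖y‖ ^ 2) • y‖ * ‖y‖)^2) := (Real.sqrt_sq h1).symm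
    _ = Real.sqrt ((‖y - ((⟪x, y⟫ : ℝ) / ‖x‖ ^ 2) • x‖ * ‖x‖)^2) := by rw [h]
    _ = _ := Real.sqrt_sq h2

/-- `e^{-t} |x| sinθ ≤ |y - e^{-t} x|` -/
lemma geom {m : ℕ} (x y : EuclideanSpace ℝ (Fin m)) (hx : x ≠ 0) (hy : y ≠ 0) (t : ℝ) :
    Real.exp (-t) * (‖x‖ * (‖yPerp m x y‖ / ‖y‖)) ≤ ‖y - Real.exp (-t) • x‖ := by
  have hY : (0:ℝ) < ‖y‖ := norm_pos_iff.mpr hy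
  have hb : ‖x‖ * (‖yPerp m x y‖ / ‖y‖) = ‖x - ((⟪y, x⟫ : ℝ) / ‖y‖ ^ 2) • y‖ := by
    rw [yPerp,
      show ‖x‖ * (‖y - ((⟪x, y⟫ : ℝ) / ‖x‖ ^ 2) • x‖ / ‖y‖)
          = ‖y - ((⟪x, y⟫ : ℝ) / ‖x‖ ^ 2) • x‖ * ‖x‖ / ‖y‖ from by ring,
      ← perp_symm x y hx hy, mul_div_assoc, div_self hY.ne', mul_one]
  rw [hb]
  set c := Real.exp (-t) with hc
  have hc0 : (0:ℝ) < c := Real.exp_pos _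
  have e3 : c • (x - ((⟪y, x⟫ : ℝ) / ‖y‖ ^ 2) • y)
      = c • x - ((⟪y, c • x⟫ : ℝ) / ‖y‖ ^ 2) • y := by
    rw [real_inner_smul_right, smul_sub, smul_smul, mul_div_assoc]
  have e4 : c * ‖x - ((⟪y, x⟫ : ℝ) / ‖y‖ ^ 2) • y‖
      = ‖c • x - ((⟪y, c • x⟫ : ℝ) / ‖y‖ ^ 2) • y‖ := by
    rw [← e3, norm_smul, Real.norm_eq_abs, abs_of_pos hc0]
  rw [e4]
  calc ‖c • x - ((⟪y, c • x⟫ : ℝ) / ‖y‖ ^ 2) • y‖ ≤ ‖c • x - (1:ℝ) • y‖ :=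
        proj_min y (c • x) hy 1
    _ = ‖y - c • x‖ := by rw [one_smul, norm_sub_rev]

/-- Reduction of the kernel (sans Gaussian weight) to the key quantity. -/
lemma reduce (n : ℕ) (t r : ℝ) (ht : 0 < t) (hr : 0 ≤ r) :
    t * Real.exp (-((n:ℝ)+2)*t) * (1 - Real.exp (-2*t)) ^ (-((n:ℝ)+4)/2) * r^2 *
      Real.exp (-r^2 / (1 - Real.exp (-2*t)))
    ≤ (1/Real.exp 1) * (Real.exp (-((n:ℝ)*t)) * (1 - Real.exp (-2*t)) ^ (-((n:ℝ)/2)) *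
      Real.exp (-(r^2/2 / (1 - Real.exp (-2*t))))) := by
  have hneg : (-2 : ℝ) * t = -(2*t) := by ring
  set s := 1 - Real.exp (-2*t) with hsdef
  have hs0 : 0 < s := by
    have h1 : Real.exp (-2*t) < 1 := Real.exp_lt_one_iff.mpr (by nlinarith)
    simp only [hsdef]; linarith
  set u := r^2 / s with hudef
  have hu0 : 0 ≤ u := by positivity
  have hru : r^2 = s * u := by rw [hudef]; field_simp
  have h1 : t * Real.exp (-(2*t)) ≤ s/2 := by
    rw [hsdef, hneg]; exact tle t
  have h2 : u * Real.exp (-u) ≤ (2/Real.exp 1) * Real.exp (-(u/2)) := ue u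
  have hesplit : Real.exp (-((n:ℝ)+2)*t) = Real.exp (-((n:ℝ)*t)) * Real.exp (-(2*t)) := by
    rw [← Real.exp_add]; congr 1; ring
  have hs2 : s ^ (-((n:ℝ)+4)/2) * (s * s) = s ^ (-((n:ℝ)/2)) := by
    rw [show s * s = s ^ ((2:ℕ):ℝ) by rw [Real.rpow_natCast]; ring, ← Real.rpow_add hs0]
    congr 1
    push_cast; ring
  have hexp_u : Real.exp (-r^2 / s) = Real.exp (-u) := by congr 1; rw [hudef]; ring
  have hexp_u2 : Real.exp (-(u/2)) = Real.exp (-(r^2/2 / s)) := by congr 1; rw [hudef]; ring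
  have hP : (0:ℝ) < s ^ (-((n:ℝ)+4)/2) := Real.rpow_pos_of_pos hs0 _
  have hEn : (0:ℝ) < Real.exp (-((n:ℝ)*t)) := Real.exp_pos _
  calc t * Real.exp (-((n:ℝ)+2)*t) * s ^ (-((n:ℝ)+4)/2) * r^2 * Real.exp (-r^2/s)
      = (Real.exp (-((n:ℝ)*t)) * s ^ (-((n:ℝ)+4)/2) * s) *
          ((t * Real.exp (-(2*t))) * (u * Real.exp (-u))) := by
        rw [hesplit, hexp_u, hru]; ring
    _ ≤ (Real.exp (-((n:ℝ)*t)) * s ^ (-((n:ℝ)+4)/2) * s) *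
          ((s/2) * ((2/Real.exp 1) * Real.exp (-(u/2)))) := by
        apply mul_le_mul_of_nonneg_left _ (by positivity)
        exact mul_le_mul h1 h2 (by positivity) (by positivity)
    _ = (1/Real.exp 1) * (Real.exp (-((n:ℝ)*t)) * (s ^ (-((n:ℝ)+4)/2) * (s * s)) *
          Real.exp (-(u/2))) := by ring
    _ = (1/Real.exp 1) * (Real.exp (-((n:ℝ)*t)) * s ^ (-((n:ℝ)/2)) *
          Real.exp (-(r^2/2 / s))) := by rw [hs2, hexp_u2]

set_option maxHeartbeats 1000000 in
/-- Bound 1: the global-region bound by `(1+|x|)^n`. -/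
lemma P1lem (n : ℕ) (hn1 : 1 ≤ n) (X d s r t : ℝ) (hX : 0 < X) (ht : 0 < t) (hs0 : 0 < s)
    (hδ : min 1 X⁻¹ ≤ d) (htri : d - s * X ≤ r) (hr0 : 0 ≤ r) :
    Real.exp (-((n:ℝ)*t)) * s ^ (-((n:ℝ)/2)) * Real.exp (-(r^2/2 / s))
    ≤ ((1 + ((n:ℝ)/Real.exp 1) ^ n) * 8 ^ ((n:ℝ)/2) + 2 ^ ((n:ℝ)/2)) * (1+X)^n := by
  set δ := min 1 X⁻¹ with hδdef
  have hδ0 : 0 < δ := lt_min one_pos (inv_pos.mpr hX)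
  have hδX : δ⁻¹ ≤ 1 + X := by
    rcases le_total 1 X⁻¹ with h | h
    · rw [hδdef, min_eq_left h]; norm_num; linarith
    · rw [hδdef, min_eq_right h, inv_inv]; linarith
  have hδlow : (1+X)⁻¹ ≤ δ := by
    have := inv_anti₀ (inv_pos.mpr hδ0) hδX
    rwa [inv_inv] at this
  have hCn0 : (0:ℝ) < 1 + ((n:ℝ)/Real.exp 1) ^ n := by positivity
  have h1X : (0:ℝ) < 1 + X := by linarith
  have hpow1X : (0:ℝ) ≤ (1+X)^n := by positivity
  have hE1 : Real.exp (-((n:ℝ)*t)) ≤ 1 := by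
    apply Real.exp_le_one_iff.mpr
    have : (0:ℝ) ≤ (n:ℝ)*t := by positivity
    linarith
  have hQ0 : (0:ℝ) ≤ s ^ (-((n:ℝ)/2)) := Real.rpow_nonneg hs0.le _
  by_cases hAB : s * X ≤ d / 2
  · -- r ≥ δ/2
    have hr2 : δ/2 ≤ r := by linarith
    have hq : δ^2/8 ≤ r^2/2 := by nlinarith [sq_nonneg (r - δ/2)]
    have hexp : Real.exp (-(r^2/2/s)) ≤ Real.exp (-(δ^2/8/s)) := by
      apply Real.exp_le_exp.mpr
      have h' : δ^2/8/s ≤ r^2/2/s := by gcongr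
      linarith
    have hg := gausup n hn1 s (δ^2/8) hs0 (by positivity)
    have hqb : (δ^2/8) ^ (-((n:ℝ)/2)) ≤ 8 ^ ((n:ℝ)/2) * (1+X)^n := by
      have hBinv : (8*(1+X)^2)⁻¹ ≤ δ^2/8 := by
        have h2 : ((1+X)⁻¹)^2 ≤ δ^2 := by nlinarith [inv_pos.mpr h1X]
        calc (8*(1+X)^2)⁻¹ = ((1+X)⁻¹)^2/8 := by rw [mul_inv, inv_pow]; ring
          _ ≤ δ^2/8 := by linarith
      calc (δ^2/8) ^ (-((n:ℝ)/2)) ≤ (8*(1+X)^2) ^ ((n:ℝ)/2) :=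
            inv_bound ((n:ℝ)/2) (by positivity) _ _ (by positivity) hBinv
        _ = 8 ^ ((n:ℝ)/2) * (1+X)^n := Bsplit (1+X) 8 h1X.le (by norm_num) n
    have hchain : Real.exp (-((n:ℝ)*t)) * s ^ (-((n:ℝ)/2)) * Real.exp (-(r^2/2 / s))
        ≤ (1 + ((n:ℝ)/Real.exp 1) ^ n) * (8 ^ ((n:ℝ)/2) * (1+X)^n) := by
      calc Real.exp (-((n:ℝ)*t)) * s ^ (-((n:ℝ)/2)) * Real.exp (-(r^2/2 / s))
          ≤ s ^ (-((n:ℝ)/2)) * Real.exp (-(r^2/2 / s)) := by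
            have l1 : Real.exp (-((n:ℝ)*t)) * s ^ (-((n:ℝ)/2)) ≤ s ^ (-((n:ℝ)/2)) := by
              nlinarith [hE1, hQ0]
            exact mul_le_mul_of_nonneg_right l1 (Real.exp_pos _).le
        _ ≤ s ^ (-((n:ℝ)/2)) * Real.exp (-(δ^2/8/s)) :=
            mul_le_mul_of_nonneg_left hexp hQ0
        _ ≤ (1 + ((n:ℝ)/Real.exp 1) ^ n) * (δ^2/8) ^ (-((n:ℝ)/2)) := hg
        _ ≤ (1 + ((n:ℝ)/Real.exp 1) ^ n) * (8 ^ ((n:ℝ)/2) * (1+X)^n) :=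
            mul_le_mul_of_nonneg_left hqb hCn0.le
    have h8 : (0:ℝ) < 2 ^ ((n:ℝ)/2) := by positivity
    linarith [hchain, mul_nonneg h8.le hpow1X]
  · -- s is bounded below
    push_neg at hAB
    have h1 : δ ≤ 2 * (s * X) := by linarith
    have hsB : (2*(1+X)^2)⁻¹ ≤ s := by
      have h2 : (1+X)⁻¹ ≤ 2*(s*X) := le_trans hδlow h1
      rw [← one_div, div_le_iff₀ (by positivity)]
      have hinv : (1+X) * (1+X)⁻¹ = 1 := mul_inv_cancel₀ h1X.ne'
      calc (1:ℝ) = (1+X) * (1+X)⁻¹ := hinv.symm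
        _ ≤ (1+X) * (2*(s*X)) := mul_le_mul_of_nonneg_left h2 h1X.le
        _ ≤ s * (2*(1+X)^2) := by nlinarith [mul_pos hs0 h1X]
    have hQb : s ^ (-((n:ℝ)/2)) ≤ 2 ^ ((n:ℝ)/2) * (1+X)^n := by
      calc s ^ (-((n:ℝ)/2)) ≤ (2*(1+X)^2) ^ ((n:ℝ)/2) :=
            inv_bound ((n:ℝ)/2) (by positivity) _ _ (by positivity) hsB
        _ = 2 ^ ((n:ℝ)/2) * (1+X)^n := Bsplit (1+X) 2 h1X.le (by norm_num) n
    have hE2 : Real.exp (-(r^2/2/s)) ≤ 1 := by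
      apply Real.exp_le_one_iff.mpr
      have : (0:ℝ) ≤ r^2/2/s := by positivity
      linarith
    have h8 : (0:ℝ) < 8 ^ ((n:ℝ)/2) := by positivity
    have hchain : Real.exp (-((n:ℝ)*t)) * s ^ (-((n:ℝ)/2)) * Real.exp (-(r^2/2 / s))
        ≤ 2 ^ ((n:ℝ)/2) * (1+X)^n := by
      calc Real.exp (-((n:ℝ)*t)) * s ^ (-((n:ℝ)/2)) * Real.exp (-(r^2/2 / s))
          ≤ 1 * s ^ (-((n:ℝ)/2)) * 1 := by
            apply mul_le_mul (mul_le_mul hE1 le_rfl hQ0 one_pos.le) hE2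
              (Real.exp_pos _).le (by positivity)
        _ = s ^ (-((n:ℝ)/2)) := by ring
        _ ≤ 2 ^ ((n:ℝ)/2) * (1+X)^n := hQb
    linarith [hchain, mul_nonneg (mul_nonneg hCn0.le h8.le) hpow1X]

/-- Bound 2: the angle bound by `(|x| sinθ)^{-n}`. -/
lemma P2lem (n : ℕ) (hn1 : 1 ≤ n) (b s r t : ℝ) (hb : 0 < b) (hs0 : 0 < s)
    (hgeo : Real.exp (-t) * b ≤ r) (hr0 : 0 ≤ r) :
    Real.exp (-((n:ℝ)*t)) * s ^ (-((n:ℝ)/2)) * Real.exp (-(r^2/2 / s))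
    ≤ ((1 + ((n:ℝ)/Real.exp 1) ^ n) * 2 ^ ((n:ℝ)/2)) * b ^ (-(n:ℝ)) := by
  have hCn0 : (0:ℝ) < 1 + ((n:ℝ)/Real.exp 1) ^ n := by positivity
  set q := Real.exp (-t)^2 * b^2 / 2 with hqdef
  have hq0 : 0 < q := by positivity
  have hq : q ≤ r^2/2 := by
    have h1 : (Real.exp (-t) * b)^2 ≤ r^2 := by
      apply pow_le_pow_left₀ (by positivity) hgeo
    rw [hqdef]; nlinarith
  have hexp : Real.exp (-(r^2/2/s)) ≤ Real.exp (-(q/s)) := by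
    apply Real.exp_le_exp.mpr
    have h' : q/s ≤ r^2/2/s := by gcongr
    linarith
  have hg := gausup n hn1 s q hs0 hq0
  have hqeq : q ^ (-((n:ℝ)/2)) = Real.exp ((n:ℝ)*t) * (2 ^ ((n:ℝ)/2) * b ^ (-(n:ℝ))) := by
    have e0 : q = Real.exp (-(2*t)) * (2⁻¹ * b^2) := by
      rw [hqdef, show (-(2*t)) = (2:ℕ) * (-t) by push_cast; ring, Real.exp_nat_mul]
      ring
    rw [e0, Real.mul_rpow (Real.exp_pos _).le (by positivity)]
    congr 1
    · rw [← Real.exp_mul]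
      congr 1
      ring
    · rw [Real.mul_rpow (by norm_num) (by positivity)]
      congr 1
      · rw [Real.inv_rpow (by norm_num), Real.rpow_neg (by norm_num), inv_inv]
      · rw [← Real.rpow_natCast b 2, ← Real.rpow_mul hb.le]
        congr 1
        push_cast; ring
  have hQ0 : (0:ℝ) ≤ s ^ (-((n:ℝ)/2)) := Real.rpow_nonneg hs0.le _
  have hcancel : Real.exp (-((n:ℝ)*t)) * Real.exp ((n:ℝ)*t) = 1 := by
    rw [← Real.exp_add]; simp
  calc Real.exp (-((n:ℝ)*t)) * s ^ (-((n:ℝ)/2)) * Real.exp (-(r^2/2 / s))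
      ≤ Real.exp (-((n:ℝ)*t)) * (s ^ (-((n:ℝ)/2)) * Real.exp (-(q/s))) := by
        rw [mul_assoc]
        exact mul_le_mul_of_nonneg_left (mul_le_mul_of_nonneg_left hexp hQ0)
          (Real.exp_pos _).le
    _ ≤ Real.exp (-((n:ℝ)*t)) * ((1 + ((n:ℝ)/Real.exp 1) ^ n) * q ^ (-((n:ℝ)/2))) :=
        mul_le_mul_of_nonneg_left hg (Real.exp_pos _).le
    _ = (Real.exp (-((n:ℝ)*t)) * Real.exp ((n:ℝ)*t)) *
          ((1 + ((n:ℝ)/Real.exp 1) ^ n) * (2 ^ ((n:ℝ)/2) * b ^ (-(n:ℝ)))) := by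
        rw [hqeq]; ring
    _ = ((1 + ((n:ℝ)/Real.exp 1) ^ n) * 2 ^ ((n:ℝ)/2)) * b ^ (-(n:ℝ)) := by
        rw [hcancel]; ring

end Stmt14Aux

set_option maxHeartbeats 1600000 in
open Stmt14Aux in
/-- Global estimate for `sup_{t>0} K₃(t,x,y)`. -/
theorem stmt14 (n : ℕ) (hn : 2 ≤ n) :
    ∃ C : ℝ, 0 < C ∧ ∀ x y : EuclideanSpace ℝ (Fin n), (x, y) ∉ localN n →
      x ≠ 0 → y ≠ 0 → ∀ t : ℝ, 0 < t →
      K3 n t x y ≤ C * minTerm n x y * Real.exp (‖y‖ ^ 2 - ‖x‖ ^ 2) := by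
  have hn1 : 1 ≤ n := le_trans (by norm_num) hn
  have hCn0 : (0:ℝ) < 1 + ((n:ℝ)/Real.exp 1) ^ n := by positivity
  have h8 : (0:ℝ) < 8 ^ ((n:ℝ)/2) := by positivity
  have h2 : (0:ℝ) < 2 ^ ((n:ℝ)/2) := by positivity
  have hc0 : (0:ℝ) < 2/Real.pi ^ ((n:ℝ)/2) := by positivity
  refine ⟨(2/Real.pi ^ ((n:ℝ)/2)) * (1/Real.exp 1) *
    ((1 + ((n:ℝ)/Real.exp 1) ^ n) * 8 ^ ((n:ℝ)/2) + 2 ^ ((n:ℝ)/2) +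
      (1 + ((n:ℝ)/Real.exp 1) ^ n) * 2 ^ ((n:ℝ)/2)), by positivity, ?_⟩
  intro x y hN hx hy t ht
  have hX : (0:ℝ) < ‖x‖ := norm_pos_iff.mpr hx
  have hY : (0:ℝ) < ‖y‖ := norm_pos_iff.mpr hy
  have hs0 : (0:ℝ) < 1 - Real.exp (-2*t) := by
    have : Real.exp (-2*t) < 1 := Real.exp_lt_one_iff.mpr (by nlinarith)
    linarith
  have hr0 : (0:ℝ) ≤ ‖y - Real.exp (-t) • x‖ := norm_nonneg _
  -- global region gives a lower bound on |x - y|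
  have hNd : min 1 ‖x‖⁻¹ ≤ ‖x - y‖ := by
    simp only [localN, Set.mem_setOf_eq, not_and_or, not_le] at hN
    rcases hN with h | h
    · exact le_trans (min_le_left _ _) h.le
    · refine le_trans (min_le_right _ _) ?_
      rw [inv_eq_one_div]
      exact (div_le_iff₀ hX).mpr h.le
  -- triangle inequality
  have htri : ‖x - y‖ - (1 - Real.exp (-2*t)) * ‖x‖ ≤ ‖y - Real.exp (-t) • x‖ := by
    have h1 : ‖x - y‖ ≤ ‖x - Real.exp (-t) • x‖ + ‖Real.exp (-t) • x - y‖ := by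
      rw [show x - y = (x - Real.exp (-t) • x) + (Real.exp (-t) • x - y) from by abel]
      exact norm_add_le _ _
    have h2 : ‖x - Real.exp (-t) • x‖ = (1 - Real.exp (-t)) * ‖x‖ := by
      rw [show x - Real.exp (-t) • x = (1 - Real.exp (-t)) • x from by rw [sub_smul, one_smul],
        norm_smul, Real.norm_eq_abs, abs_of_nonneg]
      have : Real.exp (-t) ≤ 1 := Real.exp_le_one_iff.mpr (by linarith)
      linarith
    have h3 : ‖Real.exp (-t) • x - y‖ = ‖y - Real.exp (-t) • x‖ := norm_sub_rev _ _
    have h4 : Real.exp (-2*t) ≤ Real.exp (-t) := Real.exp_le_exp.mpr (by linarith)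
    rw [h2, h3] at h1
    nlinarith
  have hP1 := P1lem n hn1 ‖x‖ ‖x - y‖ (1 - Real.exp (-2*t)) ‖y - Real.exp (-t) • x‖ t
    hX ht hs0 hNd htri hr0
  have hred := reduce n t ‖y - Real.exp (-t) • x‖ ht hr0
  have hK3 : K3 n t x y = (2/Real.pi ^ ((n:ℝ)/2)) *
      (t * Real.exp (-((n:ℝ)+2)*t) * (1 - Real.exp (-2*t)) ^ (-((n:ℝ)+4)/2) *
        ‖y - Real.exp (-t) • x‖^2 *
        Real.exp (-‖y - Real.exp (-t) • x‖^2 / (1 - Real.exp (-2*t)))) *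
      Real.exp (‖y‖^2-‖x‖^2) := by
    rw [K3]; ring
  set G := Real.exp (-((n:ℝ)*t)) * (1 - Real.exp (-2*t)) ^ (-((n:ℝ)/2)) *
      Real.exp (-(‖y - Real.exp (-t) • x‖^2/2 / (1 - Real.exp (-2*t)))) with hG
  have hG0 : 0 ≤ G := by
    rw [hG]; positivity
  have hminT : G ≤ ((1 + ((n:ℝ)/Real.exp 1) ^ n) * 8 ^ ((n:ℝ)/2) + 2 ^ ((n:ℝ)/2) +
      (1 + ((n:ℝ)/Real.exp 1) ^ n) * 2 ^ ((n:ℝ)/2)) * minTerm n x y := by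
    rw [minTerm]
    split_ifs with h0
    · have h1 : (0:ℝ) ≤ (1+‖x‖)^n := by positivity
      linarith [hP1, mul_nonneg (mul_nonneg hCn0.le h2.le) h1]
    · have hyp : (0:ℝ) < ‖yPerp n x y‖ := lt_of_le_of_ne (norm_nonneg _) (Ne.symm h0)
      have hb0 : (0:ℝ) < ‖x‖ * (‖yPerp n x y‖/‖y‖) := by positivity
      have hgeo := geom x y hx hy t
      have hP2 := P2lem n hn1 (‖x‖ * (‖yPerp n x y‖/‖y‖)) (1 - Real.exp (-2*t))
        ‖y - Real.exp (-t) • x‖ t hb0 hs0 hgeo hr0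
      rw [← hG] at hP2
      have hB0 : (0:ℝ) ≤ (‖x‖*(‖yPerp n x y‖/‖y‖)) ^ (-(n:ℝ)) :=
        Real.rpow_nonneg hb0.le _
      rcases min_cases ((1+‖x‖)^n) ((‖x‖*(‖yPerp n x y‖/‖y‖)) ^ (-(n:ℝ))) with
        ⟨hmeq, _⟩ | ⟨hmeq, _⟩ <;> rw [hmeq]
      · have h1 : (0:ℝ) ≤ (1+‖x‖)^n := by positivity
        linarith [hP1, mul_nonneg (mul_nonneg hCn0.le h2.le) h1]
      · linarith [hP2, mul_nonneg (mul_nonneg hCn0.le h8.le) hB0,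
          mul_nonneg h2.le hB0]
  rw [hK3]
  have hE : (0:ℝ) < Real.exp (‖y‖^2 - ‖x‖^2) := Real.exp_pos _
  calc (2/Real.pi ^ ((n:ℝ)/2)) *
      (t * Real.exp (-((n:ℝ)+2)*t) * (1 - Real.exp (-2*t)) ^ (-((n:ℝ)+4)/2) *
        ‖y - Real.exp (-t) • x‖^2 *
        Real.exp (-‖y - Real.exp (-t) • x‖^2 / (1 - Real.exp (-2*t)))) *
      Real.exp (‖y‖^2-‖x‖^2)
      ≤ (2/Real.pi ^ ((n:ℝ)/2)) * ((1/Real.exp 1) * G) * Real.exp (‖y‖^2-‖x‖^2) :=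
        mul_le_mul_of_nonneg_right (mul_le_mul_of_nonneg_left hred hc0.le) hE.le
    _ ≤ (2/Real.pi ^ ((n:ℝ)/2)) * ((1/Real.exp 1) *
          (((1 + ((n:ℝ)/Real.exp 1) ^ n) * 8 ^ ((n:ℝ)/2) + 2 ^ ((n:ℝ)/2) +
            (1 + ((n:ℝ)/Real.exp 1) ^ n) * 2 ^ ((n:ℝ)/2)) * minTerm n x y)) *
          Real.exp (‖y‖^2-‖x‖^2) := by
        apply mul_le_mul_of_nonneg_right _ hE.le
        apply mul_le_mul_of_nonneg_left _ hc0.le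
        exact mul_le_mul_of_nonneg_left hminT (by positivity)
    _ = (2/Real.pi ^ ((n:ℝ)/2)) * (1/Real.exp 1) *
          ((1 + ((n:ℝ)/Real.exp 1) ^ n) * 8 ^ ((n:ℝ)/2) + 2 ^ ((n:ℝ)/2) +
            (1 + ((n:ℝ)/Real.exp 1) ^ n) * 2 ^ ((n:ℝ)/2)) * minTerm n x y *
          Real.exp (‖y‖^2-‖x‖^2) := by ring
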